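/- arXiv:2401.08536 — 5 statements merged into one kernel-verified Lean document; each statement's English description precedes it below -/
import Mathlib

section
/- Let S, T be real m×n matrices with T = S + E. Then the spectral-norm difference of Moore–Penrose pseudo-inverses satisfies ‖T† − S†‖₂ ≤ ((1+√5)/2) · max{‖S†‖₂², ‖T†‖₂²} · ‖E‖₂. -/
/-!
Write `D = T† - S†`, `P = S S†` and `Q = T† T`; both are orthogonal projections. The Penrose
equations give the four blocks of `D` with respect to `P` on the domain and `Q` on the codomain:
`Q D P = -T† E S†`, `Q D (1 - P) = T† T†ᵀ Eᵀ (1 - P)`, `(1 - Q) D P = (1 - Q) Eᵀ S†ᵀ S†` and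
`(1 - Q) D (1 - P) = 0`. Each nonzero block has norm at most `max ‖S†‖² ‖T†‖² · ‖E‖`, and a
block operator with three blocks of norm at most `a` and a vanishing fourth one has norm at most
`φ a`, because `φ` is the spectral norm of the matrix `[[1, 1], [1, 0]]`.
-/

open Matrix
/-- The four Penrose conditions characterizing the Moore–Penrose pseudo-inverse
of a real matrix. -/
def IsMoorePenroseInv {m n : ℕ} (A : Matrix (Fin m) (Fin n) ℝ)
    (B : Matrix (Fin n) (Fin m) ℝ) : Prop :=
  A * B * A = A ∧ B * A * B = B ∧ (A * B)ᵀ = A * B ∧ (B * A)ᵀ = B * A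

/-- The spectral (operator 2-) norm of a real matrix. -/
noncomputable def specNorm {m n : ℕ} (A : Matrix (Fin m) (Fin n) ℝ) : ℝ :=
  ‖LinearMap.toContinuousLinearMap (Matrix.toEuclideanLin A)‖

open Real goldenRatio

theorem mul_le_max_sq (a b : ℝ) : a * b ≤ max (a ^ 2) (b ^ 2) := by
  nlinarith [sq_nonneg (a - b), le_max_left (a ^ 2) (b ^ 2), le_max_right (a ^ 2) (b ^ 2)]

theorem add_sq_add_sq_le_goldenRatio_sq_mul (s t : ℝ) :
    (s + t) ^ 2 + s ^ 2 ≤ φ ^ 2 * (s ^ 2 + t ^ 2) := by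
  have h : φ ^ 2 * (s ^ 2 + t ^ 2) - ((s + t) ^ 2 + s ^ 2) = (φ - 1) * (s - φ * t) ^ 2 := by
    linear_combination (s ^ 2 + 2 * s * t - (φ - 1) * t ^ 2) * goldenRatio_sq
  linarith [mul_nonneg (sub_nonneg.2 one_lt_goldenRatio.le) (sq_nonneg (s - φ * t))]

theorem ContinuousLinearMap.opNorm_comp_le_of_le {𝕜 E F G : Type*} [NontriviallyNormedField 𝕜]
    [SeminormedAddCommGroup E] [NormedSpace 𝕜 E] [SeminormedAddCommGroup F] [NormedSpace 𝕜 F]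
    [SeminormedAddCommGroup G] [NormedSpace 𝕜 G] {g : F →L[𝕜] G} {f : E →L[𝕜] F} {a b : ℝ}
    (hg : ‖g‖ ≤ a) (hf : ‖f‖ ≤ b) : ‖g ∘L f‖ ≤ a * b :=
  (opNorm_comp_le g f).trans (mul_le_mul hg hf (norm_nonneg f) ((norm_nonneg g).trans hg))

namespace ContinuousLinearMap

variable {𝕜 E F : Type*} [RCLike 𝕜]
  [NormedAddCommGroup E] [InnerProductSpace 𝕜 E] [CompleteSpace E]
  [NormedAddCommGroup F] [InnerProductSpace 𝕜 F] [CompleteSpace F]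

theorem _root_.IsStarProjection.norm_sq_add_norm_sq_one_sub {p : E →L[𝕜] E}
    (hp : IsStarProjection p) (x : E) : ‖p x‖ ^ 2 + ‖(1 - p) x‖ ^ 2 = ‖x‖ ^ 2 := by
  obtain ⟨K, _, rfl⟩ := isStarProjection_iff_eq_starProjection.mp hp
  rw [← K.starProjection_orthogonal', K.norm_sq_eq_add_norm_sq_starProjection x]

theorem norm_le_goldenRatio_mul_of_blocks {D : F →L[𝕜] E} {P : F →L[𝕜] F} {Q : E →L[𝕜] E}
    (hP : IsStarProjection P) (hQ : IsStarProjection Q) {a : ℝ}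
    (h₁ : ‖Q ∘L D ∘L P‖ ≤ a) (h₂ : ‖Q ∘L D ∘L (1 - P)‖ ≤ a)
    (h₃ : ‖(1 - Q) ∘L D ∘L P‖ ≤ a) (h₄ : (1 - Q) ∘L D ∘L (1 - P) = 0) :
    ‖D‖ ≤ φ * a := by
  have ha : 0 ≤ a := (norm_nonneg _).trans h₁
  refine opNorm_le_bound _ (by positivity) fun x => ?_
  set s := ‖P x‖
  set t := ‖(1 - P) x‖
  have hPx : P (P x) = P x := congr($(hP.isIdempotentElem.eq) x)
  have hPx' : (1 - P) ((1 - P) x) = (1 - P) x := congr($(hP.one_sub.isIdempotentElem.eq) x)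
  have hsplit : P x + (1 - P) x = x := by simp
  have hQ₁ : ‖Q (D x)‖ ≤ a * (s + t) := by
    have : Q (D x) = (Q ∘L D ∘L P) (P x) + (Q ∘L D ∘L (1 - P)) ((1 - P) x) := by
      simp only [comp_apply, hPx, hPx', ← map_add, hsplit]
    rw [this, mul_add]
    exact (norm_add_le _ _).trans (add_le_add (le_of_opNorm_le _ h₁ _) (le_of_opNorm_le _ h₂ _))
  have hQ₂ : ‖(1 - Q) (D x)‖ ≤ a * s := by
    have : (1 - Q) (D x) =
        ((1 - Q) ∘L D ∘L P) (P x) + ((1 - Q) ∘L D ∘L (1 - P)) ((1 - P) x) := by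
      simp only [comp_apply, hPx, hPx', ← map_add, hsplit]
    rw [this, h₄, _root_.zero_apply, add_zero]
    exact le_of_opNorm_le _ h₃ _
  have hsq : ‖D x‖ ^ 2 ≤ (φ * a * ‖x‖) ^ 2 := calc
    ‖D x‖ ^ 2 = ‖Q (D x)‖ ^ 2 + ‖(1 - Q) (D x)‖ ^ 2 := (hQ.norm_sq_add_norm_sq_one_sub _).symm
    _ ≤ (a * (s + t)) ^ 2 + (a * s) ^ 2 := by gcongr
    _ = a ^ 2 * ((s + t) ^ 2 + s ^ 2) := by ring
    _ ≤ a ^ 2 * (φ ^ 2 * (s ^ 2 + t ^ 2)) := by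
      gcongr; exact add_sq_add_sq_le_goldenRatio_sq_mul s t
    _ = (φ * a * ‖x‖) ^ 2 := by rw [hP.norm_sq_add_norm_sq_one_sub]; ring
  exact (pow_le_pow_iff_left₀ (norm_nonneg _) (by positivity) two_ne_zero).1 hsq

structure IsMoorePenroseInverse (A : E →L[𝕜] F) (B : F →L[𝕜] E) : Prop where
  comp_comp_left : A ∘L B ∘L A = A
  comp_comp_right : B ∘L A ∘L B = B
  isSelfAdjoint_comp_left : IsSelfAdjoint (A ∘L B)
  isSelfAdjoint_comp_right : IsSelfAdjoint (B ∘L A)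

namespace IsMoorePenroseInverse

variable {A A' : E →L[𝕜] F} {B B' : F →L[𝕜] E}

theorem isStarProjection_comp_left (h : IsMoorePenroseInverse A B) :
    IsStarProjection (A ∘L B) :=
  ⟨by rw [IsIdempotentElem, mul_def, ← comp_assoc, comp_assoc A, h.comp_comp_left],
    h.isSelfAdjoint_comp_left⟩

theorem isStarProjection_comp_right (h : IsMoorePenroseInverse A B) :
    IsStarProjection (B ∘L A) :=
  ⟨by rw [IsIdempotentElem, mul_def, ← comp_assoc, comp_assoc B, h.comp_comp_right],
    h.isSelfAdjoint_comp_right⟩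

theorem apply_apply_apply (h : IsMoorePenroseInverse A B) (y : F) : B (A (B y)) = B y :=
  congr($(h.comp_comp_right) y)

theorem apply_adjoint_apply_adjoint_apply (h : IsMoorePenroseInverse A B) (y : F) :
    B (adjoint B (adjoint A y)) = B y := by
  have : B ∘L adjoint B ∘L adjoint A = B := by
    rw [← adjoint_comp, h.isSelfAdjoint_comp_left.adjoint_eq, h.comp_comp_right]
  exact congr($this y)

theorem adjoint_apply_adjoint_apply_apply (h : IsMoorePenroseInverse A B) (y : F) :
    adjoint A (adjoint B (B y)) = B y := by
  have : adjoint A ∘L adjoint B ∘L B = B := by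
    rw [← comp_assoc, ← adjoint_comp, h.isSelfAdjoint_comp_right.adjoint_eq, comp_assoc,
      h.comp_comp_right]
  exact congr($this y)

theorem adjoint_apply_apply_apply (h : IsMoorePenroseInverse A B) (y : F) :
    adjoint A (A (B y)) = adjoint A y := by
  have : adjoint A ∘L A ∘L B = adjoint A := by
    rw [← h.isSelfAdjoint_comp_left.adjoint_eq, ← adjoint_comp, comp_assoc, h.comp_comp_left]
  exact congr($this y)

theorem apply_apply_adjoint_apply (h : IsMoorePenroseInverse A B) (y : F) :
    B (A (adjoint A y)) = adjoint A y := by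
  have : (B ∘L A) ∘L adjoint A = adjoint A := by
    rw [← h.isSelfAdjoint_comp_right.adjoint_eq, ← adjoint_comp, h.comp_comp_left]
  exact congr($this y)

theorem comp_sub_comp_comp (h : IsMoorePenroseInverse A B) (h' : IsMoorePenroseInverse A' B') :
    (B' ∘L A') ∘L (B' - B) ∘L (A ∘L B) = -(B' ∘L (A' - A) ∘L B) := by
  ext y
  simp [h.apply_apply_apply, h'.apply_apply_apply]

theorem comp_sub_comp_one_sub (h : IsMoorePenroseInverse A B)
    (h' : IsMoorePenroseInverse A' B') :
    (B' ∘L A') ∘L (B' - B) ∘L (1 - A ∘L B) =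
      B' ∘L adjoint B' ∘L adjoint (A' - A) ∘L (1 - A ∘L B) := by
  ext y
  simp [h.apply_apply_apply, h'.apply_apply_apply, h.adjoint_apply_apply_apply,
    h'.apply_adjoint_apply_adjoint_apply]

theorem one_sub_comp_sub_comp_comp (h : IsMoorePenroseInverse A B)
    (h' : IsMoorePenroseInverse A' B') :
    (1 - B' ∘L A') ∘L (B' - B) ∘L (A ∘L B) =
      (1 - B' ∘L A') ∘L adjoint (A' - A) ∘L adjoint B ∘L B := by
  ext y
  simp [h.apply_apply_apply, h'.apply_apply_apply, h.adjoint_apply_adjoint_apply_apply,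
    h'.apply_apply_adjoint_apply]

theorem one_sub_comp_sub_comp_one_sub (h : IsMoorePenroseInverse A B)
    (h' : IsMoorePenroseInverse A' B') :
    (1 - B' ∘L A') ∘L (B' - B) ∘L (1 - A ∘L B) = 0 := by
  ext y
  simp [h.apply_apply_apply, h'.apply_apply_apply]

theorem norm_sub_le (h : IsMoorePenroseInverse A B) (h' : IsMoorePenroseInverse A' B') :
    ‖B' - B‖ ≤ φ * max (‖B‖ ^ 2) (‖B'‖ ^ 2) * ‖A' - A‖ := by
  have hP := h.isStarProjection_comp_left
  have hQ := h'.isStarProjection_comp_right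
  have hB := (adjoint (𝕜 := 𝕜)).norm_map B
  have hB' := (adjoint (𝕜 := 𝕜)).norm_map B'
  have hA := (adjoint (𝕜 := 𝕜)).norm_map (A' - A)
  rw [mul_assoc]
  apply norm_le_goldenRatio_mul_of_blocks hP hQ
  · rw [h.comp_sub_comp_comp h', norm_neg]
    calc _ ≤ ‖B'‖ * (‖A' - A‖ * ‖B‖) :=
          opNorm_comp_le_of_le le_rfl (opNorm_comp_le_of_le le_rfl le_rfl)
      _ = ‖B‖ * ‖B'‖ * ‖A' - A‖ := by ring
      _ ≤ _ := by gcongr; exact mul_le_max_sq _ _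
  · rw [h.comp_sub_comp_one_sub h']
    calc _ ≤ ‖B'‖ * (‖B'‖ * (‖A' - A‖ * 1)) := opNorm_comp_le_of_le le_rfl
          (opNorm_comp_le_of_le hB'.le (opNorm_comp_le_of_le hA.le hP.one_sub.norm_le))
      _ = ‖B'‖ ^ 2 * ‖A' - A‖ := by ring
      _ ≤ _ := by gcongr; exact le_max_right _ _
  · rw [h.one_sub_comp_sub_comp_comp h']
    calc _ ≤ 1 * (‖A' - A‖ * (‖B‖ * ‖B‖)) := opNorm_comp_le_of_le hQ.one_sub.norm_le
          (opNorm_comp_le_of_le hA.le (opNorm_comp_le_of_le hB.le le_rfl))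
      _ = ‖B‖ ^ 2 * ‖A' - A‖ := by ring
      _ ≤ _ := by gcongr; exact le_max_left _ _
  · exact h.one_sub_comp_sub_comp_one_sub h'

end IsMoorePenroseInverse

end ContinuousLinearMap

namespace Matrix

noncomputable def toEuclideanContinuousLinearMap {m n : Type*} [Fintype m] [Fintype n]
    [DecidableEq n] : Matrix m n ℝ ≃ₗ[ℝ] (EuclideanSpace ℝ n →L[ℝ] EuclideanSpace ℝ m) :=
  toEuclideanLin ≪≫ₗ LinearMap.toContinuousLinearMap

theorem toEuclideanContinuousLinearMap_mul {l m n : Type*} [Fintype l] [Fintype m] [Fintype n]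
    [DecidableEq m] [DecidableEq n] (A : Matrix l m ℝ) (B : Matrix m n ℝ) :
    toEuclideanContinuousLinearMap (A * B) =
      toEuclideanContinuousLinearMap A ∘L toEuclideanContinuousLinearMap B := by
  ext x : 1
  simp [toEuclideanContinuousLinearMap]

theorem toEuclideanContinuousLinearMap_transpose {m n : Type*} [Fintype m] [Fintype n]
    [DecidableEq m] [DecidableEq n] (A : Matrix m n ℝ) :
    toEuclideanContinuousLinearMap Aᵀ =
      ContinuousLinearMap.adjoint (toEuclideanContinuousLinearMap A) := by
  rw [← conjTranspose_eq_transpose_of_trivial]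
  exact congr(LinearMap.toContinuousLinearMap $(toEuclideanLin_conjTranspose_eq_adjoint A))

end Matrix

theorem IsMoorePenroseInv.toEuclideanContinuousLinearMap {m n : ℕ}
    {A : Matrix (Fin m) (Fin n) ℝ} {B : Matrix (Fin n) (Fin m) ℝ} (h : IsMoorePenroseInv A B) :
    (toEuclideanContinuousLinearMap A).IsMoorePenroseInverse
      (toEuclideanContinuousLinearMap B) := by
  obtain ⟨hABA, hBAB, hAB, hBA⟩ := h
  constructor
  · rw [← toEuclideanContinuousLinearMap_mul, ← toEuclideanContinuousLinearMap_mul,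
      ← Matrix.mul_assoc, hABA]
  · rw [← toEuclideanContinuousLinearMap_mul, ← toEuclideanContinuousLinearMap_mul,
      ← Matrix.mul_assoc, hBAB]
  all_goals rw [ContinuousLinearMap.isSelfAdjoint_iff', ← toEuclideanContinuousLinearMap_mul,
      ← toEuclideanContinuousLinearMap_transpose]
  · rw [hAB]
  · rw [hBA]

/-- Wedin's pseudo-inverse perturbation bound: for `T = S + E`,
`‖T† − S†‖₂ ≤ ((1+√5)/2) · max{‖S†‖₂², ‖T†‖₂²} · ‖E‖₂`. -/
theorem wedin_pseudoinverse_perturbation {m n : ℕ}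
    (S T E : Matrix (Fin m) (Fin n) ℝ)
    (Sd Td : Matrix (Fin n) (Fin m) ℝ)
    (hT : T = S + E)
    (hS : IsMoorePenroseInv S Sd) (hTd : IsMoorePenroseInv T Td) :
    specNorm (Td - Sd) ≤
      ((1 + Real.sqrt 5) / 2) * max (specNorm Sd ^ 2) (specNorm Td ^ 2) * specNorm E := by
  have hbound := hS.toEuclideanContinuousLinearMap.norm_sub_le hTd.toEuclideanContinuousLinearMap
  rw [← map_sub, ← map_sub, hT, add_sub_cancel_left] at hbound
  -- `specNorm X` unfolds to `‖toEuclideanContinuousLinearMap X‖` and `φ` to `(1 + √5) / 2`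
  exact hbound
end

section
/- Consider the discrete-time system x_{t+1} = G x_t + F f(x_t, t), where the nonlinearity satisfies the sector bound ‖f(x,t)‖₂ ≤ ‖U* x‖₂ for all x, t. If there exist λ > 0 and a positive-definite matrix P such that the block matrix Q₁ = [[GᵀPG − P + λ²U*ᵀU*, GᵀPF], [FᵀPG, FᵀPF − λ²I]] is negative definite, then for the Lyapunov function V(t) = x_tᵀ P x_t + λ² Σ_{τ=0}^{t−1}(‖U* x_τ‖² − ‖f(x_τ,τ)‖²), one has V(t) ≥ 0 and V(t+1) − V(t) < 0 whenever (x_t, f(x_t,t)) ≠ 0; hence x_t → 0 as t → ∞ for every initial condition (robust asymptotic stability). -/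
open Matrix Filter

lemma dot_tA {a b : Type*} [Fintype a] [Fintype b] (A : Matrix a b ℝ) (v : b → ℝ) (w : a → ℝ) :
    v ⬝ᵥ (Aᵀ *ᵥ w) = (A *ᵥ v) ⬝ᵥ w := by
  rw [Matrix.dotProduct_mulVec, Matrix.vecMul_transpose]

lemma key_alg {n m : ℕ} (G : Matrix (Fin n) (Fin n) ℝ) (F : Matrix (Fin n) (Fin m) ℝ)
    (Ustar : Matrix (Fin m) (Fin n) ℝ) (P : Matrix (Fin n) (Fin n) ℝ) (lam : ℝ)
    (xv : Fin n → ℝ) (u : Fin m → ℝ) :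
    (Sum.elim xv u) ⬝ᵥ ((Matrix.fromBlocks
        (Gᵀ * P * G - P + lam ^ 2 • (Ustarᵀ * Ustar)) (Gᵀ * P * F)
        (Fᵀ * P * G) (Fᵀ * P * F - lam ^ 2 • (1 : Matrix (Fin m) (Fin m) ℝ))) *ᵥ (Sum.elim xv u)) =
    (G *ᵥ xv + F *ᵥ u) ⬝ᵥ (P *ᵥ (G *ᵥ xv + F *ᵥ u)) - xv ⬝ᵥ (P *ᵥ xv)
      + lam ^ 2 * ((Ustar *ᵥ xv) ⬝ᵥ (Ustar *ᵥ xv) - u ⬝ᵥ u) := by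
  simp only [Matrix.fromBlocks_mulVec, sumElim_dotProduct_sumElim,
    Matrix.add_mulVec, Matrix.sub_mulVec, Matrix.smul_mulVec, Matrix.mulVec_add,
    dotProduct_add, add_dotProduct, dotProduct_sub, sub_dotProduct, dotProduct_smul,
    Sum.elim_comp_inl, Sum.elim_comp_inr, smul_dotProduct, ← Matrix.mulVec_mulVec,
    Matrix.one_mulVec, dot_tA, smul_eq_mul]
  ring

lemma quad_cont {k : Type*} [Fintype k] (M : Matrix k k ℝ) :
    Continuous fun z : k → ℝ => z ⬝ᵥ (M *ᵥ z) := by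
  simp only [dotProduct, Matrix.mulVec]
  exact continuous_finset_sum _ fun i _ => (continuous_apply i).mul
    (continuous_finset_sum _ fun j _ => continuous_const.mul (continuous_apply j))

lemma posdef_coercive {k : Type*} [Fintype k] [DecidableEq k] {M : Matrix k k ℝ}
    (hM : M.PosDef) : ∃ c > 0, ∀ z : k → ℝ, c * (z ⬝ᵥ z) ≤ z ⬝ᵥ (M *ᵥ z) := by
  by_cases hk : Nonempty k
  · set S : Set (k → ℝ) := {z | z ⬝ᵥ z = 1} with hS
    have hdc : Continuous fun z : k → ℝ => z ⬝ᵥ z := by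
      simpa using quad_cont (1 : Matrix k k ℝ)
    have hclosed : IsClosed S := isClosed_eq hdc continuous_const
    have hbdd : Bornology.IsBounded S := by
      apply Bornology.IsBounded.subset (Metric.isBounded_closedBall (x := (0 : k → ℝ)) (r := 1))
      intro z hz
      rw [hS, Set.mem_setOf_eq] at hz
      simp only [Metric.mem_closedBall, dist_zero_right]
      rw [pi_norm_le_iff_of_nonneg (by norm_num)]
      intro i
      have h1 : z i * z i ≤ 1 := by
        have h2 : z i * z i ≤ z ⬝ᵥ z := by
          rw [dotProduct]
          exact Finset.single_le_sum (f := fun j => z j * z j)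
            (fun j _ => mul_self_nonneg _) (Finset.mem_univ i)
        simpa [hz] using h2
      rw [Real.norm_eq_abs, abs_le_one_iff_mul_self_le_one]
      exact h1
    have hcpt : IsCompact S := Metric.isCompact_of_isClosed_isBounded hclosed hbdd
    obtain ⟨i⟩ := hk
    have hne : S.Nonempty := ⟨Pi.single i 1, by simp [hS, dotProduct, Pi.single_apply]⟩
    obtain ⟨z₀, hz₀S, hmin⟩ := hcpt.exists_isMinOn hne (quad_cont M).continuousOn
    have hz₀ne : z₀ ≠ 0 := by
      intro h; rw [hS] at hz₀S; simp [h] at hz₀S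
    refine ⟨z₀ ⬝ᵥ (M *ᵥ z₀), by simpa using hM.dotProduct_mulVec_pos hz₀ne, fun z => ?_⟩
    by_cases hz : z = 0
    · simp [hz]
    · have hzz : 0 < z ⬝ᵥ z := by
        rcases lt_or_eq_of_le (Finset.sum_nonneg fun j _ => mul_self_nonneg (z j) : (0:ℝ) ≤ z ⬝ᵥ z) with h | h
        · exact h
        · exact absurd (dotProduct_self_eq_zero.mp h.symm) hz
      set r := Real.sqrt (z ⬝ᵥ z) with hr
      have hrpos : 0 < r := Real.sqrt_pos.mpr hzz
      have hr2 : r ^ 2 = z ⬝ᵥ z := Real.sq_sqrt hzz.le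
      set w : k → ℝ := r⁻¹ • z with hw
      have hwS : w ∈ S := by
        simp only [hS, Set.mem_setOf_eq, hw, smul_dotProduct, dotProduct_smul,
          smul_eq_mul]
        field_simp
        rw [← hr2]
      have hq : z ⬝ᵥ (M *ᵥ z) = (z ⬝ᵥ z) * (w ⬝ᵥ (M *ᵥ w)) := by
        simp only [hw, smul_dotProduct, dotProduct_smul, Matrix.mulVec_smul,
          smul_eq_mul]
        field_simp
        rw [← hr2]
      have := hmin hwS
      calc z₀ ⬝ᵥ (M *ᵥ z₀) * (z ⬝ᵥ z) ≤ (w ⬝ᵥ (M *ᵥ w)) * (z ⬝ᵥ z) :=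
            mul_le_mul_of_nonneg_right this hzz.le
        _ = z ⬝ᵥ (M *ᵥ z) := by rw [hq]; ring
  · refine ⟨1, one_pos, fun z => ?_⟩
    have : z = 0 := funext fun i => absurd ⟨i⟩ hk
    simp [this]


/-- A symmetric real matrix is negative definite iff its negation is positive definite. -/
def Matrix.NegDef {k : Type*} [Fintype k] (M : Matrix k k ℝ) : Prop := (-M).PosDef

/-- Robust asymptotic stability under a sector-bounded nonlinearity
(Part 1 of Lemma 1): if
`Q₁ = [[GᵀPG − P + λ²U*ᵀU*, GᵀPF], [FᵀPG, FᵀPF − λ²I]] < 0`, then the Lyapunov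
function `V(t) = x_tᵀPx_t + λ²Σ_{τ<t}(‖U*x_τ‖² − ‖f(x_τ,τ)‖²)` is nonnegative,
strictly decreasing along nonzero trajectory data, and `x_t → 0`. -/
theorem robust_asymptotic_stability {n m : ℕ}
    (G : Matrix (Fin n) (Fin n) ℝ) (F : Matrix (Fin n) (Fin m) ℝ)
    (Ustar : Matrix (Fin m) (Fin n) ℝ) (P : Matrix (Fin n) (Fin n) ℝ)
    (lam : ℝ) (hlam : 0 < lam) (hP : P.PosDef)
    (f : (Fin n → ℝ) → ℕ → (Fin m → ℝ))
    (hsector : ∀ (y : Fin n → ℝ) (t : ℕ),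
      (f y t) ⬝ᵥ (f y t) ≤ (Ustar.mulVec y) ⬝ᵥ (Ustar.mulVec y))
    (hQ1 : (Matrix.fromBlocks
        (Gᵀ * P * G - P + lam ^ 2 • (Ustarᵀ * Ustar)) (Gᵀ * P * F)
        (Fᵀ * P * G) (Fᵀ * P * F - lam ^ 2 • (1 : Matrix (Fin m) (Fin m) ℝ))).NegDef)
    (x : ℕ → (Fin n → ℝ))
    (hx : ∀ t, x (t + 1) = G.mulVec (x t) + F.mulVec (f (x t) t))
    (V : ℕ → ℝ)
    (hV : ∀ t, V t = (x t) ⬝ᵥ (P.mulVec (x t)) +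
      lam ^ 2 * ∑ τ ∈ Finset.range t,
        ((Ustar.mulVec (x τ)) ⬝ᵥ (Ustar.mulVec (x τ)) - (f (x τ) τ) ⬝ᵥ (f (x τ) τ))) :
    (∀ t, 0 ≤ V t) ∧
    (∀ t, (x t ≠ 0 ∨ f (x t) t ≠ 0) → V (t + 1) - V t < 0) ∧
    Tendsto x atTop (nhds 0) := by
  set Q : Matrix (Fin n ⊕ Fin m) (Fin n ⊕ Fin m) ℝ := Matrix.fromBlocks
        (Gᵀ * P * G - P + lam ^ 2 • (Ustarᵀ * Ustar)) (Gᵀ * P * F)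
        (Fᵀ * P * G) (Fᵀ * P * F - lam ^ 2 • (1 : Matrix (Fin m) (Fin m) ℝ)) with hQdef
  have hQ : (-Q).PosDef := hQ1
  set z : ℕ → (Fin n ⊕ Fin m → ℝ) := fun t => Sum.elim (x t) (f (x t) t) with hzdef
  have hdV : ∀ t, V (t + 1) - V t = (z t) ⬝ᵥ (Q *ᵥ z t) := by
    intro t
    rw [hV, hV, Finset.sum_range_succ, hzdef]
    simp only [hQdef, key_alg, hx t]
    ring
  have part1 : ∀ t, 0 ≤ V t := by
    intro t; rw [hV]
    have h1 : 0 ≤ (x t) ⬝ᵥ (P *ᵥ x t) := by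
      have := hP.posSemidef.dotProduct_mulVec_nonneg (x t); simpa using this
    have h2 : 0 ≤ ∑ τ ∈ Finset.range t,
        ((Ustar.mulVec (x τ)) ⬝ᵥ (Ustar.mulVec (x τ)) - (f (x τ) τ) ⬝ᵥ (f (x τ) τ)) :=
      Finset.sum_nonneg fun τ _ => sub_nonneg.mpr (hsector _ _)
    have := mul_nonneg (sq_nonneg lam) h2
    linarith
  have hzne : ∀ t, (x t ≠ 0 ∨ f (x t) t ≠ 0) → z t ≠ 0 := by
    intro t h hzero
    rcases h with h | h
    · exact h (funext fun i => congrFun hzero (Sum.inl i))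
    · exact h (funext fun i => congrFun hzero (Sum.inr i))
  have part2 : ∀ t, (x t ≠ 0 ∨ f (x t) t ≠ 0) → V (t + 1) - V t < 0 := by
    intro t h
    rw [hdV t]
    have h1 := hQ.dotProduct_mulVec_pos (hzne t h)
    simp only [star_trivial, Matrix.neg_mulVec, dotProduct_neg] at h1
    linarith
  refine ⟨part1, part2, ?_⟩
  obtain ⟨c, hc, hcoer⟩ := posdef_coercive hQ
  have hstep : ∀ t, c * (x t ⬝ᵥ x t) ≤ V t - V (t + 1) := by
    intro t
    have h1 := hcoer (z t)
    simp only [Matrix.neg_mulVec, dotProduct_neg] at h1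
    have h2 : x t ⬝ᵥ x t ≤ z t ⬝ᵥ z t := by
      rw [hzdef]
      simp only [sumElim_dotProduct_sumElim]
      have : (0:ℝ) ≤ f (x t) t ⬝ᵥ f (x t) t :=
        Finset.sum_nonneg fun j _ => mul_self_nonneg _
      linarith
    have h3 := hdV t
    nlinarith [mul_le_mul_of_nonneg_left h2 hc.le]
  have hdnn : ∀ t, 0 ≤ c * (x t ⬝ᵥ x t) := fun t =>
    mul_nonneg hc.le (Finset.sum_nonneg fun j _ => mul_self_nonneg _)
  have hsum : Summable (fun t => c * (x t ⬝ᵥ x t)) := by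
    apply summable_of_sum_range_le hdnn
    intro T
    calc ∑ t ∈ Finset.range T, c * (x t ⬝ᵥ x t)
        ≤ ∑ t ∈ Finset.range T, (V t - V (t + 1)) := Finset.sum_le_sum fun t _ => hstep t
      _ = V 0 - V T := Finset.sum_range_sub' V T
      _ ≤ V 0 := by have := part1 T; linarith
  have h0 : Tendsto (fun t => c * (x t ⬝ᵥ x t)) atTop (nhds 0) := hsum.tendsto_atTop_zero
  have h0' : Tendsto (fun t => x t ⬝ᵥ x t) atTop (nhds 0) := by
    have := h0.const_mul c⁻¹
    simp only [← mul_assoc, inv_mul_cancel₀ hc.ne', one_mul, mul_zero] at this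
    exact this
  rw [tendsto_pi_nhds]
  intro i
  simp only [Pi.zero_apply]
  rw [tendsto_zero_iff_abs_tendsto_zero]
  apply tendsto_of_tendsto_of_tendsto_of_le_of_le (g := fun _ => (0:ℝ))
    (h := fun t => Real.sqrt (x t ⬝ᵥ x t)) tendsto_const_nhds
  · have : Tendsto Real.sqrt (nhds 0) (nhds 0) := by
      simpa using Real.continuous_sqrt.tendsto 0
    exact this.comp h0'
  · intro t; exact abs_nonneg _
  · intro t
    have h2 : x t i * x t i ≤ x t ⬝ᵥ x t := by
      rw [dotProduct]
      exact Finset.single_le_sum (f := fun j => x t j * x t j)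
        (fun j _ => mul_self_nonneg _) (Finset.mem_univ i)
    calc |x t i| = Real.sqrt (x t i * x t i) := (Real.sqrt_mul_self_eq_abs _).symm
      _ ≤ Real.sqrt (x t ⬝ᵥ x t) := Real.sqrt_le_sqrt h2
end

section
/- Consider the discrete-time system x_{t+1} = G x_t + F f(x_t,t) + H w_t, z_t = C x_t, with ‖f(x,t)‖ ≤ ‖U* x‖. Suppose λ > 0, γ > 0, and P > 0 satisfy the LMI: the 4×4 block matrix with blocks [GᵀPG − P + λ²U*ᵀU*, GᵀPF, GᵀPH, Cᵀ; FᵀPG, FᵀPF − λ²I, FᵀPH, 0; HᵀPG, HᵀPF, HᵀPH − γ²I, 0; C, 0, 0, −I] is negative definite. Then under zero initial condition x₀ = 0, for every disturbance sequence (w_t) and every admissible nonlinearity f, Σ_{t=0}^{N} ‖z_t‖² ≤ γ² Σ_{t=0}^{N} ‖w_t‖² for all N. -/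
open Matrix

/-- Discrete-time robust `H∞` performance (Lemma 1): if the 4×4 block LMI holds,
then under zero initial condition, `Σ_{t=0}^N ‖z_t‖² ≤ γ² Σ_{t=0}^N ‖w_t‖²` for all `N`,
for every disturbance and every sector-bounded nonlinearity. -/
theorem robust_hinf_performance {n m p q : ℕ}
    (G : Matrix (Fin n) (Fin n) ℝ) (F : Matrix (Fin n) (Fin m) ℝ)
    (H : Matrix (Fin n) (Fin p) ℝ) (C : Matrix (Fin q) (Fin n) ℝ)
    (Ustar : Matrix (Fin m) (Fin n) ℝ) (P : Matrix (Fin n) (Fin n) ℝ)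
    (lam gam : ℝ) (hlam : 0 < lam) (hgam : 0 < gam) (hP : P.PosDef)
    (hLMI : (Matrix.fromBlocks
        (Matrix.fromBlocks
          (Matrix.fromBlocks
            (Gᵀ * P * G - P + lam ^ 2 • (Ustarᵀ * Ustar)) (Gᵀ * P * F)
            (Fᵀ * P * G) (Fᵀ * P * F - lam ^ 2 • (1 : Matrix (Fin m) (Fin m) ℝ)))
          (Matrix.fromRows (Gᵀ * P * H) (Fᵀ * P * H))
          (Matrix.fromCols (Hᵀ * P * G) (Hᵀ * P * F))
          (Hᵀ * P * H - gam ^ 2 • (1 : Matrix (Fin p) (Fin p) ℝ)))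
        (Matrix.fromRows (Matrix.fromRows Cᵀ 0) 0)
        (Matrix.fromCols (Matrix.fromCols C 0) 0)
        (-(1 : Matrix (Fin q) (Fin q) ℝ))).NegDef)
    (f : (Fin n → ℝ) → ℕ → (Fin m → ℝ))
    (hsector : ∀ (y : Fin n → ℝ) (t : ℕ),
      (f y t) ⬝ᵥ (f y t) ≤ (Ustar.mulVec y) ⬝ᵥ (Ustar.mulVec y))
    (w : ℕ → (Fin p → ℝ)) (x : ℕ → (Fin n → ℝ)) (z : ℕ → (Fin q → ℝ))
    (hx0 : x 0 = 0)
    (hx : ∀ t, x (t + 1) = G.mulVec (x t) + F.mulVec (f (x t) t) + H.mulVec (w t))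
    (hz : ∀ t, z t = C.mulVec (x t)) :
    ∀ N : ℕ, ∑ t ∈ Finset.range (N + 1), (z t) ⬝ᵥ (z t) ≤
      gam ^ 2 * ∑ t ∈ Finset.range (N + 1), (w t) ⬝ᵥ (w t) := by

  -- quadratic form of the LMI along trajectories
  have key : ∀ t, (x (t+1)) ⬝ᵥ P *ᵥ (x (t+1)) - (x t) ⬝ᵥ P *ᵥ (x t)
      + (z t) ⬝ᵥ (z t) - gam ^ 2 * ((w t) ⬝ᵥ (w t)) ≤ 0 := by
    intro t
    set a := x t with ha
    set φ := f (x t) t with hφ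
    set wt := w t with hwt
    have hq := hLMI.posSemidef.dotProduct_mulVec_nonneg (Sum.elim (Sum.elim (Sum.elim a φ) wt) (C *ᵥ a))
    rw [Matrix.neg_mulVec, dotProduct_neg, star_trivial] at hq
    have hquad : (Sum.elim (Sum.elim (Sum.elim a φ) wt) (C *ᵥ a)) ⬝ᵥ
      ((Matrix.fromBlocks
        (Matrix.fromBlocks
          (Matrix.fromBlocks
            (Gᵀ * P * G - P + lam ^ 2 • (Ustarᵀ * Ustar)) (Gᵀ * P * F)
            (Fᵀ * P * G) (Fᵀ * P * F - lam ^ 2 • (1 : Matrix (Fin m) (Fin m) ℝ)))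
          (Matrix.fromRows (Gᵀ * P * H) (Fᵀ * P * H))
          (Matrix.fromCols (Hᵀ * P * G) (Hᵀ * P * F))
          (Hᵀ * P * H - gam ^ 2 • (1 : Matrix (Fin p) (Fin p) ℝ)))
        (Matrix.fromRows (Matrix.fromRows Cᵀ 0) 0)
        (Matrix.fromCols (Matrix.fromCols C 0) 0)
        (-(1 : Matrix (Fin q) (Fin q) ℝ))) *ᵥ
        (Sum.elim (Sum.elim (Sum.elim a φ) wt) (C *ᵥ a)))
    = (G *ᵥ a + F *ᵥ φ + H *ᵥ wt) ⬝ᵥ P *ᵥ (G *ᵥ a + F *ᵥ φ + H *ᵥ wt)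
      - a ⬝ᵥ P *ᵥ a
      + lam ^ 2 * ((Ustar *ᵥ a) ⬝ᵥ (Ustar *ᵥ a) - φ ⬝ᵥ φ)
      + (C *ᵥ a) ⬝ᵥ (C *ᵥ a) - gam ^ 2 * (wt ⬝ᵥ wt) := by
      simp only [fromBlocks_mulVec, fromRows_mulVec, fromCols_mulVec_sumElim,
        Sum.elim_comp_inl, Sum.elim_comp_inr, sumElim_dotProduct_sumElim,
        Matrix.sub_mulVec, Matrix.add_mulVec, Matrix.smul_mulVec,
        ← Matrix.mulVec_mulVec, Matrix.neg_mulVec, Matrix.one_mulVec, Matrix.zero_mulVec,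
        dotProduct_add, dotProduct_sub, dotProduct_smul, dotProduct_neg, dotProduct_zero,
        add_zero, zero_add, Matrix.mulVec_add, smul_eq_mul]
      simp only [dotProduct_mulVec (R := ℝ), vecMul_transpose]
      simp only [← dotProduct_mulVec (R := ℝ), Matrix.mulVec_add, dotProduct_add,
        add_dotProduct]
      ring
    rw [hquad] at hq
    have hsec := hsector (x t) t
    rw [← ha, ← hφ] at hsec
    have hxz : x (t+1) = G *ᵥ a + F *ᵥ φ + H *ᵥ wt := hx t
    have hzz : z t = C *ᵥ a := hz t
    rw [hxz, hzz]
    nlinarith [sq_nonneg lam, mul_nonneg (sq_nonneg lam) (sub_nonneg.2 hsec)]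
  -- summed dissipation inequality by induction
  have main : ∀ N : ℕ, (x (N+1)) ⬝ᵥ P *ᵥ (x (N+1)) +
      ∑ t ∈ Finset.range (N + 1), ((z t) ⬝ᵥ (z t) - gam ^ 2 * ((w t) ⬝ᵥ (w t))) ≤ 0 := by
    intro N
    induction N with
    | zero =>
      have h0 := key 0
      rw [hx0] at h0
      simp only [Matrix.mulVec_zero, dotProduct_zero] at h0
      rw [Finset.sum_range_one]; linarith
    | succ N ih =>
      have h1 := key (N+1)
      rw [Finset.sum_range_succ]
      linarith
  intro N
  have hm := main N
  have hpos : 0 ≤ (x (N+1)) ⬝ᵥ P *ᵥ (x (N+1)) := by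
    simpa [star_trivial] using hP.posSemidef.dotProduct_mulVec_nonneg (x (N+1))
  rw [Finset.sum_sub_distrib, ← Finset.mul_sum] at hm
  linarith
end

section
/- Let P be a symmetric positive definite n×n matrix and let M be the symmetric block matrix [[−P, PA, PF, PB, 0, 0], [AᵀP, −P, 0, 0, Cᵀ, Uᵀ], [FᵀP, 0, −λ²I, 0, 0, 0], [BᵀP, 0, 0, −γ²I, 0, 0], [0, C, 0, 0, −I, 0], [0, U, 0, 0, 0, −(1/λ²)I]]. Then M < 0 if and only if [[AᵀPA − P + λ²UᵀU + CᵀC, AᵀPF, AᵀPB], [FᵀPA, FᵀPF − λ²I, FᵀPB], [BᵀPA, BᵀPF, BᵀPB − γ²I]] < 0. -/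
open Matrix

section Helpers

variable {l m n : Type*} [Fintype l] [Fintype m] [Fintype n]
  [DecidableEq l] [DecidableEq m] [DecidableEq n]

set_option linter.unusedSectionVars false

lemma myPosDef_submatrix {M : Matrix m m ℝ} (h : M.PosDef) (e : l ≃ m) :
    (M.submatrix e e).PosDef := by
  rw [posDef_iff_dotProduct_mulVec] at h ⊢
  refine ⟨(Matrix.isHermitian_submatrix_equiv e).mpr h.1, fun x hx => ?_⟩
  have hx' : x ∘ e.symm ≠ 0 := by
    intro hc
    apply hx
    ext i
    simpa using congrFun hc (e i)
  have key := h.2 hx'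
  have : star x ⬝ᵥ (M.submatrix e e *ᵥ x) = star (x ∘ e.symm) ⬝ᵥ (M *ᵥ (x ∘ e.symm)) := by
    rw [submatrix_mulVec_equiv]
    have h1 : star x = (star (x ∘ e.symm)) ∘ e := by
      ext i; simp
    rw [h1, comp_equiv_dotProduct_comp_equiv]
  rw [this]
  exact key

lemma posDef_submatrix_equiv' (e : l ≃ m) {M : Matrix m m ℝ} :
    (M.submatrix e e).PosDef ↔ M.PosDef := by
  refine ⟨fun h => ?_, fun h => myPosDef_submatrix h e⟩
  have := myPosDef_submatrix h e.symm
  simpa [submatrix_submatrix] using this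

lemma posDef_fromBlocks₂₂' {A : Matrix m m ℝ} (B : Matrix m n ℝ) {D : Matrix n n ℝ}
    (hD : D.PosDef) :
    (fromBlocks A B Bᵀ D).PosDef ↔ (A - B * D⁻¹ * Bᵀ).PosDef := by
  haveI := hD.isUnit.invertible
  have hBt : (Bᵀ : Matrix n m ℝ) = Bᴴ := (conjTranspose_eq_transpose_of_trivial B)
  rw [hBt]
  rw [posDef_iff_dotProduct_mulVec, posDef_iff_dotProduct_mulVec]
  constructor
  · rintro ⟨h1, h2⟩
    refine ⟨(IsHermitian.fromBlocks₂₂ A B hD.1).mp h1, fun x hx => ?_⟩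
    have hz : (Sum.elim x (-((D⁻¹ * Bᴴ) *ᵥ x)) : m ⊕ n → ℝ) ≠ 0 := by
      intro hc
      apply hx
      ext i
      exact congrFun hc (Sum.inl i)
    have key := h2 hz
    rw [dotProduct_mulVec, schur_complement_eq₂₂ A B x (-((D⁻¹ * Bᴴ) *ᵥ x)) hD.1,
      add_neg_cancel] at key
    simpa [dotProduct_mulVec] using key
  · rintro ⟨h1, h2⟩
    refine ⟨(IsHermitian.fromBlocks₂₂ A B hD.1).mpr h1, fun z hz => ?_⟩
    rw [← Sum.elim_comp_inl_inr z, dotProduct_mulVec,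
      schur_complement_eq₂₂ A B _ _ hD.1]
    by_cases hx : z ∘ Sum.inl = 0
    · have hy : z ∘ Sum.inr ≠ 0 := by
        intro hc
        apply hz
        ext (i | i)
        · exact congrFun hx i
        · exact congrFun hc i
      have hw : ((D⁻¹ * Bᴴ) *ᵥ (z ∘ Sum.inl) + z ∘ Sum.inr) ≠ 0 := by
        simpa [hx] using hy
      have h1' := (posDef_iff_dotProduct_mulVec.mp hD).2 hw
      rw [dotProduct_mulVec] at h1'
      have h2' : star (z ∘ Sum.inl) ᵥ* (A - B * D⁻¹ * Bᴴ) ⬝ᵥ (z ∘ Sum.inl) = 0 := by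
        rw [hx]; simp
      rw [h2']
      simpa using h1'
    · have hpos := h2 hx
      rw [dotProduct_mulVec] at hpos
      have hnn : (0 : ℝ) ≤ star ((D⁻¹ * Bᴴ) *ᵥ (z ∘ Sum.inl) + z ∘ Sum.inr) ᵥ* D ⬝ᵥ
          ((D⁻¹ * Bᴴ) *ᵥ (z ∘ Sum.inl) + z ∘ Sum.inr) := by
        rw [← dotProduct_mulVec]
        exact (posSemidef_iff_dotProduct_mulVec.mp hD.posSemidef).2 _
      linarith

lemma posDef_fromBlocks₁₁' {A : Matrix m m ℝ} (B : Matrix m n ℝ) (D : Matrix n n ℝ)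
    (hA : A.PosDef) :
    (fromBlocks A B Bᵀ D).PosDef ↔ (D - Bᵀ * A⁻¹ * B).PosDef := by
  rw [← posDef_submatrix_equiv' (Equiv.sumComm n m) (M := fromBlocks A B Bᵀ D)]
  have : (fromBlocks A B Bᵀ D).submatrix (Equiv.sumComm n m) (Equiv.sumComm n m)
      = fromBlocks D Bᵀ (Bᵀ)ᵀ A := by
    simp [Equiv.sumComm_apply, fromBlocks_submatrix_sum_swap_sum_swap]
  rw [this]
  simpa using posDef_fromBlocks₂₂' (A := D) Bᵀ hA

lemma posDef_fromBlocks_diag {A : Matrix m m ℝ} {D : Matrix n n ℝ}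
    (hA : A.PosDef) (hD : D.PosDef) : (fromBlocks A 0 0 D).PosDef := by
  have := (posDef_fromBlocks₂₂' (A := A) (0 : Matrix m n ℝ) hD).mpr (by simpa using hA)
  simpa using this

lemma posDef_smul_one {c : ℝ} (hc : 0 < c) : (c • (1 : Matrix m m ℝ)).PosDef := by
  rw [smul_one_eq_diagonal]
  exact .diagonal fun _ => hc

lemma cancel_aux {k k' : Type*} [Fintype n] {P : Matrix n n ℝ} (hP : IsUnit P.det)
    (X : Matrix k n ℝ) (Y : Matrix n k' ℝ) : X * P * P⁻¹ * (P * Y) = X * P * Y := by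
  rw [Matrix.mul_assoc (X * P) P⁻¹ (P * Y), ← Matrix.mul_assoc P⁻¹ P Y,
    nonsing_inv_mul P hP, Matrix.one_mul]

lemma fromBlocks_sub {α : Type*} [Sub α] {l' m' n' o' : Type*}
    (A : Matrix n' l' α) (B : Matrix n' m' α) (C : Matrix o' l' α) (D : Matrix o' m' α)
    (A' : Matrix n' l' α) (B' : Matrix n' m' α) (C' : Matrix o' l' α) (D' : Matrix o' m' α) :
    fromBlocks A B C D - fromBlocks A' B' C' D' =
      fromBlocks (A - A') (B - B') (C - C') (D - D') := by
  ext (i | i) (j | j) <;> simp [fromBlocks]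

lemma fromColumns_sub {α : Type*} [Sub α] {m' n₁ n₂ : Type*}
    (A₁ : Matrix m' n₁ α) (A₂ : Matrix m' n₂ α) (B₁ : Matrix m' n₁ α) (B₂ : Matrix m' n₂ α) :
    fromCols A₁ A₂ - fromCols B₁ B₂ = fromCols (A₁ - B₁) (A₂ - B₂) := by
  ext i (j | j) <;> simp [fromCols]

lemma fromRows_sub {α : Type*} [Sub α] {n' m₁ m₂ : Type*}
    (A₁ : Matrix m₁ n' α) (A₂ : Matrix m₂ n' α) (B₁ : Matrix m₁ n' α) (B₂ : Matrix m₂ n' α) :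
    fromRows A₁ A₂ - fromRows B₁ B₂ = fromRows (A₁ - B₁) (A₂ - B₂) := by
  ext (i | i) j <;> rfl

end Helpers


/-- Schur-complement equivalence for the synthesis LMI: the 6×6 block matrix `M`
is negative definite iff the reduced 3×3 block matrix is negative definite. -/
theorem schur_synthesis_lmi_equivalence {n m p q r : ℕ}
    (A : Matrix (Fin n) (Fin n) ℝ) (F : Matrix (Fin n) (Fin m) ℝ)
    (B : Matrix (Fin n) (Fin p) ℝ) (C : Matrix (Fin q) (Fin n) ℝ)
    (U : Matrix (Fin r) (Fin n) ℝ) (P : Matrix (Fin n) (Fin n) ℝ)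
    (lam gam : ℝ) (hlam : 0 < lam) (hgam : 0 < gam)
    (hP : P.PosDef) (hPsymm : Pᵀ = P) :
    (Matrix.fromBlocks
        (Matrix.fromBlocks
          (Matrix.fromBlocks (-P) (P * A) (Aᵀ * P) (-P))
          (Matrix.fromBlocks (P * F) (P * B) 0 0)
          (Matrix.fromBlocks (Fᵀ * P) 0 (Bᵀ * P) 0)
          (Matrix.fromBlocks (-(lam ^ 2 • (1 : Matrix (Fin m) (Fin m) ℝ))) 0 0
            (-(gam ^ 2 • (1 : Matrix (Fin p) (Fin p) ℝ)))))
        (Matrix.fromRows (Matrix.fromBlocks 0 0 Cᵀ Uᵀ) 0)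
        (Matrix.fromCols (Matrix.fromBlocks 0 C 0 U) 0)
        (Matrix.fromBlocks (-(1 : Matrix (Fin q) (Fin q) ℝ)) 0 0
          (-((1 / lam ^ 2) • (1 : Matrix (Fin r) (Fin r) ℝ))))).NegDef ↔
    (Matrix.fromBlocks
        (Matrix.fromBlocks
          (Aᵀ * P * A - P + lam ^ 2 • (Uᵀ * U) + Cᵀ * C) (Aᵀ * P * F)
          (Fᵀ * P * A) (Fᵀ * P * F - lam ^ 2 • (1 : Matrix (Fin m) (Fin m) ℝ)))
        (Matrix.fromRows (Aᵀ * P * B) (Fᵀ * P * B))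
        (Matrix.fromCols (Bᵀ * P * A) (Bᵀ * P * F))
        (Bᵀ * P * B - gam ^ 2 • (1 : Matrix (Fin p) (Fin p) ℝ))).NegDef := by
  have hPd : IsUnit P.det := (Matrix.isUnit_iff_isUnit_det P).mp hP.isUnit
  have hlam2 : (0:ℝ) < lam ^ 2 := by positivity
  have hgam2 : (0:ℝ) < gam ^ 2 := by positivity
  unfold Matrix.NegDef
  -- Step 1: rewrite the negated big matrix in `fromBlocks A₀ B₀ B₀ᵀ D₀` form
  have e1 : -(Matrix.fromBlocks
        (Matrix.fromBlocks
          (Matrix.fromBlocks (-P) (P * A) (Aᵀ * P) (-P))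
          (Matrix.fromBlocks (P * F) (P * B) 0 0)
          (Matrix.fromBlocks (Fᵀ * P) 0 (Bᵀ * P) 0)
          (Matrix.fromBlocks (-(lam ^ 2 • (1 : Matrix (Fin m) (Fin m) ℝ))) 0 0
            (-(gam ^ 2 • (1 : Matrix (Fin p) (Fin p) ℝ)))))
        (Matrix.fromRows (Matrix.fromBlocks 0 0 Cᵀ Uᵀ) 0)
        (Matrix.fromCols (Matrix.fromBlocks 0 C 0 U) 0)
        (Matrix.fromBlocks (-(1 : Matrix (Fin q) (Fin q) ℝ)) 0 0
          (-((1 / lam ^ 2) • (1 : Matrix (Fin r) (Fin r) ℝ))))) =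
      fromBlocks
        (fromBlocks (fromBlocks P (-(P * A)) (-(Aᵀ * P)) P)
          (fromBlocks (-(P * F)) (-(P * B)) 0 0)
          (fromBlocks (-(Fᵀ * P)) 0 (-(Bᵀ * P)) 0)
          (fromBlocks (lam ^ 2 • 1) 0 0 (gam ^ 2 • 1)))
        (fromRows (fromBlocks 0 0 (-Cᵀ) (-Uᵀ)) 0)
        (fromRows (fromBlocks 0 0 (-Cᵀ) (-Uᵀ)) 0)ᵀ
        (fromBlocks 1 0 0 ((1 / lam ^ 2) • 1)) := by
    rw [transpose_fromRows, fromBlocks_transpose]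
    simp [fromBlocks_neg, fromRows_neg, fromCols_neg]
  rw [e1]
  have hD₀ : (fromBlocks (1 : Matrix (Fin q) (Fin q) ℝ) 0 0
      ((1 / lam ^ 2) • (1 : Matrix (Fin r) (Fin r) ℝ))).PosDef :=
    posDef_fromBlocks_diag Matrix.PosDef.one (posDef_smul_one (by positivity))
  rw [posDef_fromBlocks₂₂' _ hD₀]
  have hDinv : (fromBlocks (1 : Matrix (Fin q) (Fin q) ℝ) 0 0
      ((1 / lam ^ 2) • (1 : Matrix (Fin r) (Fin r) ℝ)))⁻¹ =
      fromBlocks 1 0 0 (lam ^ 2 • 1) := by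
    apply inv_eq_right_inv
    rw [fromBlocks_multiply]
    simp [smul_smul, one_div, inv_mul_cancel₀ hlam2.ne', mul_inv_cancel₀ hlam2.ne', fromBlocks_one]
  rw [hDinv]
  have hBEB : (fromRows (fromBlocks 0 0 (-Cᵀ) (-Uᵀ)) 0 :
        Matrix ((Fin n ⊕ Fin n) ⊕ (Fin m ⊕ Fin p)) (Fin q ⊕ Fin r) ℝ) *
        (fromBlocks 1 0 0 (lam ^ 2 • 1) : Matrix (Fin q ⊕ Fin r) (Fin q ⊕ Fin r) ℝ) *
        (fromRows (fromBlocks 0 0 (-Cᵀ) (-Uᵀ)) 0 :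
          Matrix ((Fin n ⊕ Fin n) ⊕ (Fin m ⊕ Fin p)) (Fin q ⊕ Fin r) ℝ)ᵀ =
      (fromBlocks (fromBlocks 0 0 0 (Cᵀ * C + lam ^ 2 • (Uᵀ * U))) 0 0 0 :
        Matrix ((Fin n ⊕ Fin n) ⊕ (Fin m ⊕ Fin p)) ((Fin n ⊕ Fin n) ⊕ (Fin m ⊕ Fin p)) ℝ) := by
    have h1 : (fromBlocks 0 0 (-Cᵀ) (-Uᵀ) : Matrix (Fin n ⊕ Fin n) (Fin q ⊕ Fin r) ℝ) *
        (fromBlocks 1 0 0 (lam ^ 2 • 1) : Matrix (Fin q ⊕ Fin r) (Fin q ⊕ Fin r) ℝ) =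
        (fromBlocks 0 0 (-Cᵀ) (-(lam ^ 2 • Uᵀ)) :
          Matrix (Fin n ⊕ Fin n) (Fin q ⊕ Fin r) ℝ) := by
      rw [fromBlocks_multiply]
      simp [Matrix.mul_smul]
    have h2 : (fromBlocks 0 0 (-Cᵀ) (-(lam ^ 2 • Uᵀ)) : Matrix (Fin n ⊕ Fin n) (Fin q ⊕ Fin r) ℝ) *
        (fromBlocks 0 (-C) 0 (-U) : Matrix (Fin q ⊕ Fin r) (Fin n ⊕ Fin n) ℝ) =
        (fromBlocks 0 0 0 (Cᵀ * C + lam ^ 2 • (Uᵀ * U)) :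
          Matrix (Fin n ⊕ Fin n) (Fin n ⊕ Fin n) ℝ) := by
      rw [fromBlocks_multiply]
      simp [Matrix.smul_mul]
    rw [transpose_fromRows, fromBlocks_transpose]
    simp only [transpose_neg, transpose_transpose, transpose_zero]
    rw [fromRows_mul, h1, fromRows_mul_fromCols]
    simp [h2, Matrix.zero_mul, Matrix.mul_zero]
  rw [hBEB]
  have e2 : (fromBlocks (fromBlocks P (-(P * A)) (-(Aᵀ * P)) P)
          (fromBlocks (-(P * F)) (-(P * B)) 0 0)
          (fromBlocks (-(Fᵀ * P)) 0 (-(Bᵀ * P)) 0)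
          (fromBlocks (lam ^ 2 • 1) 0 0 (gam ^ 2 • 1)) :
        Matrix ((Fin n ⊕ Fin n) ⊕ (Fin m ⊕ Fin p)) ((Fin n ⊕ Fin n) ⊕ (Fin m ⊕ Fin p)) ℝ) -
        fromBlocks (fromBlocks 0 0 0 (Cᵀ * C + lam ^ 2 • (Uᵀ * U))) 0 0 0 =
      (fromBlocks P
        (fromCols (-(P * A)) (fromCols (-(P * F)) (-(P * B))))
        (fromCols (-(P * A)) (fromCols (-(P * F)) (-(P * B))))ᵀ
        (fromBlocks (P - (Cᵀ * C + lam ^ 2 • (Uᵀ * U))) 0 0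
          (fromBlocks (lam ^ 2 • 1) 0 0 (gam ^ 2 • 1)))).submatrix
        (Equiv.sumAssoc (Fin n) (Fin n) (Fin m ⊕ Fin p))
        (Equiv.sumAssoc (Fin n) (Fin n) (Fin m ⊕ Fin p)) := by
    have hB₁t : (fromCols (-(P * A)) (fromCols (-(P * F)) (-(P * B))))ᵀ =
        fromRows (-(Aᵀ * P)) (fromRows (-(Fᵀ * P)) (-(Bᵀ * P))) := by
      simp [transpose_fromCols, transpose_neg, transpose_mul, hPsymm]
    rw [hB₁t]
    ext ((i | i) | (i | i)) ((j | j) | (j | j)) <;>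
      simp [fromBlocks, fromRows_apply_inl, fromRows_apply_inr, fromCols_apply_inl, fromCols_apply_inr, Equiv.sumAssoc, Matrix.sub_apply,
        Matrix.neg_apply, Matrix.add_apply, Matrix.smul_apply, Matrix.one_apply] <;> ring
  rw [e2, posDef_submatrix_equiv',
    posDef_fromBlocks₁₁' (fromCols (-(P * A)) (fromCols (-(P * F)) (-(P * B)))) _ hP]
  have hB₁t : (fromCols (-(P * A)) (fromCols (-(P * F)) (-(P * B))))ᵀ =
      fromRows (-(Aᵀ * P)) (fromRows (-(Fᵀ * P)) (-(Bᵀ * P))) := by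
    simp [transpose_fromCols, transpose_neg, transpose_mul, hPsymm]
  have hS : (fromCols (-(P * A)) (fromCols (-(P * F)) (-(P * B))))ᵀ * P⁻¹ *
      fromCols (-(P * A)) (fromCols (-(P * F)) (-(P * B))) =
      fromBlocks (Aᵀ * P * A) (fromCols (Aᵀ * P * F) (Aᵀ * P * B))
        (fromRows (Fᵀ * P * A) (Bᵀ * P * A))
        (fromBlocks (Fᵀ * P * F) (Fᵀ * P * B) (Bᵀ * P * F) (Bᵀ * P * B)) := by
    rw [hB₁t]
    simp [fromRows_mul, mul_fromCols, fromRows_mul_fromCols, Matrix.neg_mul,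
      Matrix.mul_neg, neg_neg, cancel_aux hPd]
    ext (i | (i | i)) (j | (j | j)) <;> simp [fromBlocks, fromRows_apply_inl, fromRows_apply_inr, fromCols_apply_inl, fromCols_apply_inr]
  rw [hS]
  have e4 : (fromBlocks (P - (Cᵀ * C + lam ^ 2 • (Uᵀ * U))) 0 0
        (fromBlocks (lam ^ 2 • 1) 0 0 (gam ^ 2 • 1)) :
        Matrix (Fin n ⊕ (Fin m ⊕ Fin p)) (Fin n ⊕ (Fin m ⊕ Fin p)) ℝ) -
      fromBlocks (Aᵀ * P * A) (fromCols (Aᵀ * P * F) (Aᵀ * P * B))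
        (fromRows (Fᵀ * P * A) (Bᵀ * P * A))
        (fromBlocks (Fᵀ * P * F) (Fᵀ * P * B) (Bᵀ * P * F) (Bᵀ * P * B)) =
      (-(Matrix.fromBlocks
        (Matrix.fromBlocks
          (Aᵀ * P * A - P + lam ^ 2 • (Uᵀ * U) + Cᵀ * C) (Aᵀ * P * F)
          (Fᵀ * P * A) (Fᵀ * P * F - lam ^ 2 • (1 : Matrix (Fin m) (Fin m) ℝ)))
        (Matrix.fromRows (Aᵀ * P * B) (Fᵀ * P * B))
        (Matrix.fromCols (Bᵀ * P * A) (Bᵀ * P * F))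
        (Bᵀ * P * B - gam ^ 2 • (1 : Matrix (Fin p) (Fin p) ℝ)))).submatrix
        (Equiv.sumAssoc (Fin n) (Fin m) (Fin p)).symm
        (Equiv.sumAssoc (Fin n) (Fin m) (Fin p)).symm := by
    ext (i | (i | i)) (j | (j | j)) <;>
      simp [fromBlocks, fromRows_apply_inl, fromRows_apply_inr, fromCols_apply_inl, fromCols_apply_inr, Equiv.sumAssoc, Matrix.sub_apply,
        Matrix.neg_apply, Matrix.add_apply, Matrix.smul_apply, Matrix.one_apply] <;> ring
  rw [e4, posDef_submatrix_equiv']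
end

section
/- If the matrices [[Y₂, Y₁B̄₂],[0, I]] and [[X₂ᵀ, 0],[C̄₂X₁, I]] are invertible, then the controller matrices are uniquely recovered from (Â_Q, B̂_Q, Ĉ_Q) by [[A_Q, B_Q],[C_Q, 0]] = [[Y₂, Y₁B̄₂],[0, I]]⁻¹ ( [[Â_Q, B̂_Q],[Ĉ_Q, 0]] − [[Y₁ĀX₁, 0],[0, 0]] ) [[X₂ᵀ, 0],[C̄₂X₁, I]]⁻¹. -/
open Matrix

/-!
Multiplying the block matrix `[[A_Q, B_Q],[C_Q, 0]]` on the left by `[[Y₂, Y₁B̄₂],[0, I]]` and on the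
right by `[[X₂ᵀ, 0],[C̄₂X₁, I]]` produces exactly the change of variables without its constant term
`Y₁ĀX₁`; cancelling the two invertible factors recovers the controller.
-/

namespace Matrix

variable {l m n α : Type*} [Fintype l] [Fintype m] [Fintype n]

theorem eq_nonsing_inv_mul_mul_nonsing_inv [DecidableEq m] [DecidableEq n] [CommRing α]
    {A : Matrix m m α} {B : Matrix n n α} {P Q : Matrix m n α}
    (hA : IsUnit A) (hB : IsUnit B) (h : A * P * B = Q) :
    P = A⁻¹ * Q * B⁻¹ := by
  rw [← h, ← Matrix.mul_assoc, ← Matrix.mul_assoc,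
    nonsing_inv_mul _ ((isUnit_iff_isUnit_det A).mp hA), Matrix.one_mul,
    Matrix.mul_assoc, mul_nonsing_inv _ ((isUnit_iff_isUnit_det B).mp hB), Matrix.mul_one]

theorem fromBlocks_controller_transform [DecidableEq l] [DecidableEq m] [Ring α]
    (A X X₁ Y₁ Y₂ : Matrix n n α) (B₂ : Matrix n m α) (C : Matrix m n α)
    (B : Matrix n l α) (C₂ : Matrix l n α) :
    fromBlocks Y₂ (Y₁ * B₂) 0 (1 : Matrix m m α) * fromBlocks A B C 0 *
        fromBlocks X 0 (C₂ * X₁) (1 : Matrix l l α) =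
      fromBlocks (Y₁ * B₂ * C * X + Y₂ * B * C₂ * X₁ + Y₂ * A * X) (Y₂ * B) (C * X) 0 := by
  simp only [fromBlocks_multiply, Matrix.mul_zero, Matrix.zero_mul, Matrix.one_mul,
    Matrix.mul_one, add_zero, zero_add, Matrix.mul_assoc, Matrix.add_mul]
  congr 1
  abel

end Matrix

/-- Recovery of the controller matrices from the transformed variables:
if `[[Y₂, Y₁B̄₂],[0, I]]` and `[[X₂ᵀ, 0],[C̄₂X₁, I]]` are invertible, then
`[[A_Q, B_Q],[C_Q, 0]] = [[Y₂, Y₁B̄₂],[0, I]]⁻¹ ([[Â_Q, B̂_Q],[Ĉ_Q, 0]] −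
[[Y₁ĀX₁, 0],[0, 0]]) [[X₂ᵀ, 0],[C̄₂X₁, I]]⁻¹`. -/
theorem controller_recovery {n mu pq : ℕ}
    (Abar X1 X2 Y1 Y2 AQ : Matrix (Fin n) (Fin n) ℝ)
    (B2bar : Matrix (Fin n) (Fin mu) ℝ) (CQ : Matrix (Fin mu) (Fin n) ℝ)
    (BQ : Matrix (Fin n) (Fin pq) ℝ) (C2bar : Matrix (Fin pq) (Fin n) ℝ)
    (AQhat : Matrix (Fin n) (Fin n) ℝ) (BQhat : Matrix (Fin n) (Fin pq) ℝ)
    (CQhat : Matrix (Fin mu) (Fin n) ℝ)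
    (hAQhat : AQhat = Y1 * Abar * X1 + Y1 * B2bar * CQ * X2ᵀ +
      Y2 * BQ * C2bar * X1 + Y2 * AQ * X2ᵀ)
    (hBQhat : BQhat = Y2 * BQ)
    (hCQhat : CQhat = CQ * X2ᵀ)
    (hM1 : IsUnit (Matrix.fromBlocks Y2 (Y1 * B2bar) 0
      (1 : Matrix (Fin mu) (Fin mu) ℝ)))
    (hM2 : IsUnit (Matrix.fromBlocks X2ᵀ 0 (C2bar * X1)
      (1 : Matrix (Fin pq) (Fin pq) ℝ))) :
    Matrix.fromBlocks AQ BQ CQ 0 =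
      (Matrix.fromBlocks Y2 (Y1 * B2bar) 0 (1 : Matrix (Fin mu) (Fin mu) ℝ))⁻¹ *
        (Matrix.fromBlocks AQhat BQhat CQhat 0 -
          Matrix.fromBlocks (Y1 * Abar * X1) 0 0 0) *
        (Matrix.fromBlocks X2ᵀ 0 (C2bar * X1) (1 : Matrix (Fin pq) (Fin pq) ℝ))⁻¹ := by
  refine eq_nonsing_inv_mul_mul_nonsing_inv hM1 hM2 ?_
  rw [fromBlocks_controller_transform, eq_sub_iff_add_eq, fromBlocks_add, hAQhat, hBQhat, hCQhat]
  congr 1 <;> abel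
end
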